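/- arXiv:1605.00432 — 4 statements merged into one kernel-verified Lean document; each statement's English description precedes it below -/
import Mathlib

section
/- If α is a 2-form on a finite-dimensional real inner product space V (identified with a skew-symmetric endomorphism) and β is a q-form on V, then the contraction-wedge operation α ⊼ β := Σᵢ (eᵢ ⌟ α) ∧ (eᵢ ⌟ β) over an orthonormal basis (eᵢ) equals the natural action α · β of 𝔰𝔬(V) on Λ^q V by derivations. -/
open scoped RealInnerProductSpace BigOperators

/-- Moving the first argument of a `cons` into slot `j` costs a sign `(-1)^j`. -/
theorem cons_eq_update_comp_cycleRange_symm {V : Type*} {q : ℕ}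
    (v : Fin (q + 1) → V) (j : Fin (q + 1)) (x : V) :
    (Fin.cons x (fun t => v (j.succAbove t)) : Fin (q + 1) → V)
      = Function.update v j x ∘ (Equiv.symm (Fin.cycleRange j)) := by
  funext i
  induction i using Fin.cases with
  | zero =>
    have h0 : (Equiv.symm j.cycleRange) 0 = j :=
      j.cycleRange.injective (by simp)
    rw [Function.comp_apply, h0, Function.update_self, Fin.cons_zero]
  | succ t =>
    simp [Fin.cycleRange_symm_succ, Function.update_apply,
      Fin.succAbove_ne j t]

theorem beta_cons_eq {V : Type*} [NormedAddCommGroup V] [InnerProductSpace ℝ V]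
    {q : ℕ} (β : V [⋀^Fin (q + 1)]→ₗ[ℝ] ℝ)
    (v : Fin (q + 1) → V) (j : Fin (q + 1)) (x : V) :
    β (Fin.cons x (fun t => v (j.succAbove t)))
      = (-1 : ℝ) ^ (j : ℕ) * β (Function.update v j x) := by
  rw [cons_eq_update_comp_cycleRange_symm]
  have h := β.map_perm (Function.update v j x) (Equiv.symm (Fin.cycleRange j))
  rw [h]
  have hs : Equiv.Perm.sign (Equiv.symm (Fin.cycleRange j)) = (-1) ^ (j : ℕ) := by
    rw [show (Equiv.symm (Fin.cycleRange j)) = (Fin.cycleRange j)⁻¹ from rfl, map_inv,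
      Fin.sign_cycleRange]
    simp
  rw [hs]
  simp [Units.smul_def]

/-- For a 2-form `α` on a finite-dimensional real inner product space `V`,
identified with a skew-symmetric endomorphism `A`, and a `(q+1)`-form `β`, the operation
`α ⊼ β = Σᵢ (eᵢ ⌟ α) ∧ (eᵢ ⌟ β)` over an orthonormal basis `(eᵢ)` equals the natural
derivation action `α · β` of `𝔰𝔬(V)` on forms.  Both sides are evaluated pointwise on a
tuple of vectors; the wedge of the 1-form `eᵢ ⌟ α` with the `q`-form `eᵢ ⌟ β` is written
out by its standard formula. -/
theorem contraction_wedge_eq_derivation_action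
    {V : Type*} [NormedAddCommGroup V] [InnerProductSpace ℝ V] [FiniteDimensional ℝ V]
    {n q : ℕ} (e : OrthonormalBasis (Fin n) ℝ V)
    (A : V →ₗ[ℝ] V) (hA : ∀ x y : V, ⟪A x, y⟫ = -⟪x, A y⟫)
    (α : V [⋀^Fin 2]→ₗ[ℝ] ℝ) (hα : ∀ x y : V, α ![x, y] = ⟪A x, y⟫)
    (β : V [⋀^Fin (q + 1)]→ₗ[ℝ] ℝ) :
    ∀ v : Fin (q + 1) → V,
      (∑ i : Fin n, ∑ j : Fin (q + 1), (-1 : ℝ) ^ (j : ℕ) * α ![e i, v j] *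
          β (Fin.cons (e i) (fun t => v (j.succAbove t))))
        = -∑ j : Fin (q + 1), β (Function.update v j (A (v j))) := by
  intro v
  rw [Finset.sum_comm, ← Finset.sum_neg_distrib]
  refine Finset.sum_congr rfl fun j _ => ?_
  -- rewrite each summand
  have key : ∀ i : Fin n,
      (-1 : ℝ) ^ (j : ℕ) * α ![e i, v j] * β (Fin.cons (e i) (fun t => v (j.succAbove t)))
      = -(⟪A (v j), e i⟫ * β (Function.update v j (e i))) := by
    intro i
    rw [hα, hA, beta_cons_eq β v j (e i)]
    have hsym : ⟪e i, A (v j)⟫ = ⟪A (v j), e i⟫ := real_inner_comm _ _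
    rw [hsym]
    have h1 : ((-1:ℝ)) ^ (j : ℕ) * ((-1:ℝ)) ^ (j : ℕ) = 1 := by
      rw [← pow_add, ← two_mul, pow_mul]; norm_num
    linear_combination (-(⟪A (v j), e i⟫ * β (Function.update v j (e i)))) * h1
  simp_rw [key]
  rw [Finset.sum_neg_distrib, neg_inj]
  -- now Σᵢ ⟪A (v j), eᵢ⟫ * β (update v j eᵢ) = β (update v j (A (v j)))
  have hrep := e.sum_repr' (A (v j))
  calc ∑ i : Fin n, ⟪A (v j), e i⟫ * β (Function.update v j (e i))
      = ∑ i : Fin n, β (Function.update v j (⟪e i, A (v j)⟫ • e i)) := by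
        refine Finset.sum_congr rfl fun i _ => ?_
        rw [β.map_update_smul, real_inner_comm]
        simp
    _ = β (Function.update v j (∑ i : Fin n, ⟪e i, A (v j)⟫ • e i)) :=
        (β.toMultilinearMap.map_update_sum Finset.univ j _ v).symm
    _ = β (Function.update v j (A (v j))) := by rw [hrep]
end

section
/- Let (𝔪, g) carry tensors T : Λ²𝔪 → 𝔪 and R : Λ²𝔪 → 𝔰𝔬(𝔪) satisfying R(X,Y)·T = R(X,Y)·R = 0, the first Bianchi identity 𝔖_{X,Y,Z}(R(X,Y)Z − T(T(X,Y),Z)) = 0, and the second Bianchi identity 𝔖_{X,Y,Z} R(T(X,Y),Z) = 0. Set 𝔥 = {h ∈ 𝔰𝔬(𝔪) : h·T = h·R = 0}. Then the bracket on 𝔤 = 𝔥 ⊕ 𝔪 given by [A+X, B+Y] = [A,B] − R(X,Y) + A(Y) − B(X) − T(X,Y) satisfies the Jacobi identity, so 𝔤 is a Lie algebra (the Nomizu construction). -/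
open scoped RealInnerProductSpace BigOperators

/-- The Nomizu bracket on `𝔰𝔬(𝔪) ⊕ 𝔪` (endomorphism part ⊕ vector part):
`[A + X, B + Y] = ([A,B] − R(X,Y)) + (A Y − B X − T(X,Y))`. -/
def nomizuBracket {M : Type*} [NormedAddCommGroup M] [InnerProductSpace ℝ M]
    (T : M →ₗ[ℝ] M →ₗ[ℝ] M) (R : M →ₗ[ℝ] M →ₗ[ℝ] (M →ₗ[ℝ] M))
    (p q : (M →ₗ[ℝ] M) × M) : (M →ₗ[ℝ] M) × M :=
  (p.1 ∘ₗ q.1 - q.1 ∘ₗ p.1 - R p.2 q.2, p.1 q.2 - q.1 p.2 - T p.2 q.2)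

/-- Membership in `𝔥 = {h ∈ 𝔰𝔬(𝔪) : h · T = h · R = 0}`: a skew-symmetric endomorphism
annihilating both `T` and `R` under the natural action. -/
def memH {M : Type*} [NormedAddCommGroup M] [InnerProductSpace ℝ M]
    (T : M →ₗ[ℝ] M →ₗ[ℝ] M) (R : M →ₗ[ℝ] M →ₗ[ℝ] (M →ₗ[ℝ] M))
    (A : M →ₗ[ℝ] M) : Prop :=
  (∀ x y : M, ⟪A x, y⟫ = -⟪x, A y⟫) ∧
  (∀ x y : M, A (T x y) = T (A x) y + T x (A y)) ∧
  (∀ x y : M, A ∘ₗ R x y - R x y ∘ₗ A = R (A x) y + R x (A y))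

/-- Nomizu construction: if `(T,R)` is an infinitesimal model — `T`, `R`
alternating, `R(X,Y)` skew, `R(X,Y)·T = R(X,Y)·R = 0`, and the two Bianchi identities
hold — then the Nomizu bracket on `𝔥 ⊕ 𝔪` satisfies the Jacobi identity. -/
theorem nomizu_bracket_jacobi
    {M : Type*} [NormedAddCommGroup M] [InnerProductSpace ℝ M]
    (T : M →ₗ[ℝ] M →ₗ[ℝ] M) (hTalt : ∀ x : M, T x x = 0)
    (R : M →ₗ[ℝ] M →ₗ[ℝ] (M →ₗ[ℝ] M)) (hRalt : ∀ x : M, R x x = 0)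
    (hRskew : ∀ x y u w : M, ⟪R x y u, w⟫ = -⟪u, R x y w⟫)
    (hRT : ∀ x y u w : M, R x y (T u w) = T (R x y u) w + T u (R x y w))
    (hRR : ∀ x y u w : M,
      R x y ∘ₗ R u w - R u w ∘ₗ R x y = R (R x y u) w + R u (R x y w))
    (hB1 : ∀ x y z : M,
      R x y z + R y z x + R z x y = T (T x y) z + T (T y z) x + T (T z x) y)
    (hB2 : ∀ x y z : M, R (T x y) z + R (T y z) x + R (T z x) y = 0) :
    ∀ (A B C : M →ₗ[ℝ] M) (X Y Z : M),
      memH T R A → memH T R B → memH T R C →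
      nomizuBracket T R (nomizuBracket T R (A, X) (B, Y)) (C, Z) +
        nomizuBracket T R (nomizuBracket T R (B, Y) (C, Z)) (A, X) +
        nomizuBracket T R (nomizuBracket T R (C, Z) (A, X)) (B, Y) = 0 := by

  intro A B C X Y Z hA hB hC
  obtain ⟨-, hAT, hAR⟩ := hA
  obtain ⟨-, hBT, hBR⟩ := hB
  obtain ⟨-, hCT, hCR⟩ := hC
  -- antisymmetry of T and R
  have hT2 : ∀ x y : M, T x y + T y x = 0 := by
    intro x y
    have h := hTalt (x + y)
    simp only [map_add, LinearMap.add_apply, hTalt, zero_add, add_zero] at h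
    rw [add_comm] at h; exact h
  have hR2 : ∀ x y w : M, R x y w + R y x w = 0 := by
    intro x y w
    have h := hRalt (x + y)
    simp only [map_add, LinearMap.add_apply, hRalt, zero_add, add_zero] at h
    rw [add_comm] at h
    calc R x y w + R y x w = (R x y + R y x) w := by simp [LinearMap.add_apply]
    _ = 0 := by rw [h]; simp
  -- pointwise versions
  have hARp : ∀ x y w : M, A (R x y w) - R x y (A w) = R (A x) y w + R x (A y) w := by
    intro x y w
    have h := LinearMap.congr_fun (hAR x y) w
    simpa using h
  have hBRp : ∀ x y w : M, B (R x y w) - R x y (B w) = R (B x) y w + R x (B y) w := by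
    intro x y w
    have h := LinearMap.congr_fun (hBR x y) w
    simpa using h
  have hCRp : ∀ x y w : M, C (R x y w) - R x y (C w) = R (C x) y w + R x (C y) w := by
    intro x y w
    have h := LinearMap.congr_fun (hCR x y) w
    simpa using h
  have hB2p : ∀ x y z w : M, R (T x y) z w + R (T y z) x w + R (T z x) y w = 0 := by
    intro x y z w
    have h := LinearMap.congr_fun (hB2 x y z) w
    simpa using h
  apply Prod.ext
  · ext w
    simp only [nomizuBracket, Prod.fst_add, LinearMap.add_apply, LinearMap.sub_apply,
      LinearMap.comp_apply, map_sub, map_add, Prod.fst_zero, LinearMap.zero_apply]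
    linear_combination (norm := module) hCRp X Y w + hARp Y Z w + hBRp Z X w +
      hB2p X Y Z w + hR2 X (C Y) w + hR2 Y (A Z) w + hR2 Z (B X) w
  · simp only [nomizuBracket, Prod.snd_add, LinearMap.sub_apply, LinearMap.comp_apply,
      map_sub, map_add, Prod.snd_zero]
    linear_combination (norm := module) hCT X Y + hAT Y Z + hBT Z X - hB1 X Y Z +
      hT2 X (C Y) + hT2 Y (A Z) + hT2 Z (B X)
end

section
/- With the Nomizu Lie algebra 𝔤 = 𝔥 ⊕ 𝔪 built from an infinitesimal model (T,R), if the bracket [A+X, B+Y] = [A,B] − R(X,Y) + A(Y) − B(X) − T(X,Y) satisfies the Jacobi identity, then T and R satisfy the conditions R(X,Y)·T = R(X,Y)·R = 0 and both Bianchi identities. -/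
open scoped RealInnerProductSpace BigOperators

/-- converse of the Nomizu construction: if `𝔤 = 𝔥 ⊕ 𝔪` with the Nomizu
bracket is a Lie algebra — i.e. the bracket of two elements of `𝔥 ⊕ 𝔪` again lies in
`𝔥 ⊕ 𝔪` and the Jacobi identity holds there — then `T` and `R` satisfy
`R(X,Y)·T = R(X,Y)·R = 0` and both Bianchi identities. -/
theorem nomizu_jacobi_implies_model_conditions
    {M : Type*} [NormedAddCommGroup M] [InnerProductSpace ℝ M]
    (T : M →ₗ[ℝ] M →ₗ[ℝ] M) (hTalt : ∀ x : M, T x x = 0)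
    (R : M →ₗ[ℝ] M →ₗ[ℝ] (M →ₗ[ℝ] M)) (hRalt : ∀ x : M, R x x = 0)
    (hclosed : ∀ p q : (M →ₗ[ℝ] M) × M,
      memH T R p.1 → memH T R q.1 → memH T R (nomizuBracket T R p q).1)
    (hJac : ∀ p q r : (M →ₗ[ℝ] M) × M,
      memH T R p.1 → memH T R q.1 → memH T R r.1 →
      nomizuBracket T R (nomizuBracket T R p q) r +
        nomizuBracket T R (nomizuBracket T R q r) p +
        nomizuBracket T R (nomizuBracket T R r p) q = 0) :
    (∀ x y u w : M, R x y (T u w) = T (R x y u) w + T u (R x y w)) ∧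
    (∀ x y u w : M,
      R x y ∘ₗ R u w - R u w ∘ₗ R x y = R (R x y u) w + R u (R x y w)) ∧
    (∀ x y z : M,
      R x y z + R y z x + R z x y = T (T x y) z + T (T y z) x + T (T z x) y) ∧
    (∀ x y z : M, R (T x y) z + R (T y z) x + R (T z x) y = 0) := by
  have h0 : memH T R (0 : M →ₗ[ℝ] M) := by
    refine ⟨fun x y => by simp, fun x y => by simp, fun x y => by simp⟩
  have hneg : ∀ x y : M, memH T R (-(R x y)) := by
    intro x y
    have := hclosed (0, x) (0, y) h0 h0
    simpa [nomizuBracket] using this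
  refine ⟨?_, ?_, ?_, ?_⟩
  · intro x y u w
    have h := (hneg x y).2.1 u w
    have h' := congrArg Neg.neg h
    simp only [LinearMap.neg_apply, map_neg, LinearMap.map_neg, neg_neg, neg_add] at h'
    simpa using h'
  · intro x y u w
    have h := (hneg x y).2.2 u w
    have h' := congrArg Neg.neg h
    simp only [LinearMap.neg_comp, LinearMap.comp_neg, map_neg, LinearMap.neg_apply,
      neg_neg, neg_add, neg_sub, sub_neg_eq_add] at h'
    rw [show R x y ∘ₗ R u w - R u w ∘ₗ R x y
        = -(R u w ∘ₗ R x y) + R x y ∘ₗ R u w by abel] at *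
    convert h' using 1 <;> abel
  · intro x y z
    have h := (hJac (0, x) (0, y) (0, z) h0 h0 h0)
    have h2 := congrArg Prod.snd h
    simp only [nomizuBracket, Prod.snd_add, Prod.snd_zero, LinearMap.zero_comp,
      LinearMap.comp_zero, sub_zero, zero_sub, LinearMap.zero_apply, map_neg,
      LinearMap.neg_apply, LinearMap.sub_apply, neg_neg, neg_zero, sub_neg_eq_add] at h2
    have h2' : -(R x y z) + T (T x y) z + (-(R y z x) + T (T y z) x)
        + (-(R z x y) + T (T z x) y) = 0 := by
      rw [← h2]
    rw [← sub_eq_zero]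
    rw [← neg_eq_zero, ← h2']
    abel
  · intro x y z
    have h := (hJac (0, x) (0, y) (0, z) h0 h0 h0)
    have h1 := congrArg Prod.fst h
    simp only [nomizuBracket, Prod.fst_add, Prod.fst_zero, LinearMap.zero_comp,
      LinearMap.comp_zero, sub_zero, zero_sub, LinearMap.zero_apply, map_neg,
      map_sub, neg_neg, neg_zero, sub_neg_eq_add] at h1
    simp only [LinearMap.neg_apply, neg_neg] at h1
    rw [← h1]
end

section
/- In the setting above, Σ_{i,j} [φ(kᵢ), φ(kⱼ)] ∧ nᵢ ∧ nⱼ = 2 Σᵢ φ(kᵢ) ∧ ad(kᵢ), where ad(kᵢ) ∈ 𝔰𝔬(𝔨) is identified with a 2-form on 𝔫 via B and [·,·] is the commutator in 𝔰𝔬(𝔪) identified with a 2-form on 𝔪. -/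
open scoped RealInnerProductSpace BigOperators

/-- The wedge product of two 2-forms, written out pointwise on four vectors. -/
def wedge22 {W : Type*} (ω η : W → W → ℝ) (u₁ u₂ u₃ u₄ : W) : ℝ :=
  ω u₁ u₂ * η u₃ u₄ - ω u₁ u₃ * η u₂ u₄ + ω u₁ u₄ * η u₂ u₃ +
    ω u₂ u₃ * η u₁ u₄ - ω u₂ u₄ * η u₁ u₃ + ω u₃ u₄ * η u₁ u₂

lemma key_comm_wedge
    {K M : Type*} [LieRing K] [LieAlgebra ℝ K]
    [NormedAddCommGroup M] [InnerProductSpace ℝ M] {l : ℕ}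
    (B : K →ₗ[ℝ] K →ₗ[ℝ] ℝ)
    (hsymm : ∀ x y : K, B x y = B y x)
    (hinv : ∀ z x y : K, B ⁅z, x⁆ y + B x ⁅z, y⁆ = 0)
    (k : Fin l → K)
    (hcomplete : ∀ x : K, ∑ i : Fin l, B x (k i) • k i = x)
    (φ : K →ₗ[ℝ] M →ₗ[ℝ] M)
    (hφLie : ∀ a b : K, φ ⁅a, b⁆ = φ a ∘ₗ φ b - φ b ∘ₗ φ a)
    (a b : K) (x y : M) :
    ∑ i : Fin l, ∑ j : Fin l,
      ⟪(φ (k i) ∘ₗ φ (k j) - φ (k j) ∘ₗ φ (k i)) x, y⟫ *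
        (B (k i) a * B (k j) b - B (k i) b * B (k j) a)
    = 2 * ∑ i : Fin l, ⟪φ (k i) x, y⟫ * B ⁅k i, a⁆ b := by
  -- single-sum reconstruction
  have hsingle : ∀ c : K, ∑ i : Fin l, ⟪φ (k i) x, y⟫ * B c (k i) = ⟪φ c x, y⟫ := by
    intro c
    conv_rhs => rw [← hcomplete c]
    simp [map_sum, map_smul, sum_inner, real_inner_smul_left, mul_comm]
  have hliesum : ∀ (w : K) (f : Fin l → K), ⁅w, ∑ i : Fin l, f i⁆ = ∑ i : Fin l, ⁅w, f i⁆ :=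
    fun w f => map_sum (LieAlgebra.ad ℝ K w) f Finset.univ
  have hsumlie : ∀ (d : K) (f : Fin l → K), ⁅∑ i : Fin l, f i, d⁆ = ∑ i : Fin l, ⁅f i, d⁆ := by
    intro d f
    rw [← lie_skew, hliesum]
    rw [← Finset.sum_neg_distrib]
    exact Finset.sum_congr rfl fun i _ => (lie_skew (f i) d).symm ▸ rfl
  -- double-sum reconstruction
  have hdouble : ∀ c d : K,
      ∑ i : Fin l, ∑ j : Fin l, ⟪φ ⁅k i, k j⁆ x, y⟫ * (B c (k i) * B d (k j))
        = ⟪φ ⁅c, d⁆ x, y⟫ := by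
    intro c d
    have step : ∀ w : K, ∑ j : Fin l, ⟪φ ⁅w, k j⁆ x, y⟫ * B d (k j) = ⟪φ ⁅w, d⁆ x, y⟫ := by
      intro w
      conv_rhs => rw [← hcomplete d]
      rw [hliesum]
      simp [lie_smul, map_sum, map_smul, sum_inner, real_inner_smul_left, mul_comm]
    calc ∑ i : Fin l, ∑ j : Fin l, ⟪φ ⁅k i, k j⁆ x, y⟫ * (B c (k i) * B d (k j))
        = ∑ i : Fin l, (∑ j : Fin l, ⟪φ ⁅k i, k j⁆ x, y⟫ * B d (k j)) * B c (k i) := by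
          congr 1; ext i; rw [Finset.sum_mul]; congr 1; ext j; ring
      _ = ∑ i : Fin l, ⟪φ ⁅k i, d⁆ x, y⟫ * B c (k i) := by
          congr 1; ext i; rw [step]
      _ = ⟪φ ⁅c, d⁆ x, y⟫ := by
          conv_rhs => rw [← hcomplete c]
          rw [hsumlie]
          simp [smul_lie, map_sum, map_smul, sum_inner, real_inner_smul_left, mul_comm]
  -- rewrite the RHS
  have hB : ∀ i, B ⁅k i, a⁆ b = B ⁅a, b⁆ (k i) := by
    intro i
    have h := hinv a (k i) b
    have h2 : B ⁅a, k i⁆ b = - B ⁅k i, a⁆ b := by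
      have h3 : (⁅a, k i⁆ : K) = -⁅k i, a⁆ := by rw [lie_skew]
      rw [h3, map_neg, LinearMap.neg_apply]
    rw [h2] at h
    rw [hsymm ⁅a, b⁆ (k i)] at *
    linarith
  have hRHS : ∑ i : Fin l, ⟪φ (k i) x, y⟫ * B ⁅k i, a⁆ b = ⟪φ ⁅a, b⁆ x, y⟫ := by
    rw [← hsingle ⁅a, b⁆]
    exact Finset.sum_congr rfl fun i _ => by rw [hB]
  rw [hRHS]
  -- rewrite the LHS
  have hlie : ∀ i j : Fin l, ((φ (k i) ∘ₗ φ (k j) - φ (k j) ∘ₗ φ (k i)) x : M)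
      = φ ⁅k i, k j⁆ x := fun i j => by rw [hφLie]
  calc ∑ i : Fin l, ∑ j : Fin l,
        ⟪(φ (k i) ∘ₗ φ (k j) - φ (k j) ∘ₗ φ (k i)) x, y⟫ *
          (B (k i) a * B (k j) b - B (k i) b * B (k j) a)
      = (∑ i : Fin l, ∑ j : Fin l, ⟪φ ⁅k i, k j⁆ x, y⟫ * (B a (k i) * B b (k j)))
        - (∑ i : Fin l, ∑ j : Fin l, ⟪φ ⁅k i, k j⁆ x, y⟫ * (B b (k i) * B a (k j))) := by
        rw [← Finset.sum_sub_distrib]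
        refine Finset.sum_congr rfl fun i _ => ?_
        rw [← Finset.sum_sub_distrib]
        refine Finset.sum_congr rfl fun j _ => ?_
        rw [hlie, hsymm (k i) a, hsymm (k j) b, hsymm (k i) b, hsymm (k j) a]; ring
    _ = ⟪φ ⁅a, b⁆ x, y⟫ - ⟪φ ⁅b, a⁆ x, y⟫ := by rw [hdouble, hdouble]
    _ = 2 * ⟪φ ⁅a, b⁆ x, y⟫ := by
      have h3 : (⁅b, a⁆ : K) = -⁅a, b⁆ := by rw [lie_skew]
      rw [h3]
      simp only [map_neg, LinearMap.neg_apply, inner_neg_left]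
      ring

/-- `Σ_{i,j} [φ(kᵢ), φ(kⱼ)] ∧ nᵢ ∧ nⱼ = 2 Σᵢ φ(kᵢ) ∧ ad(kᵢ)` as 4-forms
on `𝔫 ⊕ 𝔪 = K × M`, where `ad(kᵢ)` is identified with the 2-form `(a,b) ↦ B([kᵢ,a],b)`
on `𝔫` and `[φ(kᵢ),φ(kⱼ)]` with a 2-form on `𝔪`. -/
theorem commutator_wedge_identity
    {K M : Type*} [LieRing K] [LieAlgebra ℝ K]
    [NormedAddCommGroup M] [InnerProductSpace ℝ M] {l : ℕ}
    (B : K →ₗ[ℝ] K →ₗ[ℝ] ℝ)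
    (hsymm : ∀ x y : K, B x y = B y x)
    (hinv : ∀ z x y : K, B ⁅z, x⁆ y + B x ⁅z, y⁆ = 0)
    (k : Fin l → K)
    (horth : ∀ i j, B (k i) (k j) = if i = j then (1 : ℝ) else 0)
    (hcomplete : ∀ x : K, ∑ i : Fin l, B x (k i) • k i = x)
    (φ : K →ₗ[ℝ] M →ₗ[ℝ] M)
    (hφLie : ∀ a b : K, φ ⁅a, b⁆ = φ a ∘ₗ φ b - φ b ∘ₗ φ a)
    (hφskew : ∀ (a : K) (x y : M), ⟪φ a x, y⟫ = -⟪x, φ a y⟫) :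
    ∀ u₁ u₂ u₃ u₄ : K × M,
      (∑ i : Fin l, ∑ j : Fin l,
        wedge22
          (fun u v => ⟪(φ (k i) ∘ₗ φ (k j) - φ (k j) ∘ₗ φ (k i)) u.2, v.2⟫)
          (fun u v => B (k i) u.1 * B (k j) v.1 - B (k i) v.1 * B (k j) u.1)
          u₁ u₂ u₃ u₄)
      = 2 * ∑ i : Fin l,
          wedge22
            (fun u v => ⟪φ (k i) u.2, v.2⟫)
            (fun u v => B ⁅k i, u.1⁆ v.1)
            u₁ u₂ u₃ u₄ := by
  intro u₁ u₂ u₃ u₄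
  have key := key_comm_wedge B hsymm hinv k hcomplete φ hφLie
  have K1 := key u₃.1 u₄.1 u₁.2 u₂.2
  have K2 := key u₂.1 u₄.1 u₁.2 u₃.2
  have K3 := key u₂.1 u₃.1 u₁.2 u₄.2
  have K4 := key u₁.1 u₄.1 u₂.2 u₃.2
  have K5 := key u₁.1 u₃.1 u₂.2 u₄.2
  have K6 := key u₁.1 u₂.1 u₃.2 u₄.2
  simp only [wedge22, Finset.sum_add_distrib, Finset.sum_sub_distrib]
  rw [K1, K2, K3, K4, K5, K6]
  ring
end
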